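/- Let 0 < γ < 1, 0 < α < 1 and n ≥ 1. Then |t_n| > (1−α)^γ γ^{−n} Γ(γ)^{−1} ∑_{l=1}^∞ (l^{n+γ−1} − (1−γ) l^{n+γ−2}) α^l, where the series on the right converges (it equals Li_{−n−γ+1}(α) − (1−γ) Li_{−n−γ+2}(α) in terms of the polylogarithm); here Γ is the Gamma function. -/

import Mathlib

/-- Pochhammer symbol `(γ)_l = γ(γ+1)⋯(γ+l−1)`. -/
noncomputable def poch (γ : ℝ) (l : ℕ) : ℝ := ∏ i ∈ Finset.range l, (γ + i)

/-- Stirling numbers of the second kind. -/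
def stirling2 : ℕ → ℕ → ℕ
  | 0, 0 => 1
  | 0, _+1 => 0
  | _+1, 0 => 0
  | n+1, k+1 => (k+1) * stirling2 n (k+1) + stirling2 n k

/-- `t_n(α,γ) = (−1)^n γ^{−n} ∑_{i=0}^n S(n,i) (γ)_i (α/(1−α))^i`. -/
noncomputable def tcoef (α γ : ℝ) (n : ℕ) : ℝ :=
  (-1)^n * (γ^n)⁻¹ *
    ∑ i ∈ Finset.range (n+1), (stirling2 n i : ℝ) * poch γ i * (α/(1-α))^i

/-!
With `x = α / (1 - α)`, the Stirling expansion `l ^ n = ∑ᵢ S(n, i) l (l - 1) ⋯ (l - i + 1)` and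
the binomial series `∑ₘ (c)ₘ / m! αᵐ = (1 - α) ^ (-c)` give
`γ ^ n (1 - α) ^ (-γ) |t_n| = ∑ₗ (γ)ₗ / l! · l ^ n αˡ`, the `n`-th moment of a negative binomial
series. Termwise `(γ)ₗ / l! = Γ(l + γ) / (Γ(γ) l!)`, and Wendel's inequality
`Γ(l + γ) / Γ(l + 1) ≥ (l + γ) ^ (γ - 1)` (log-convexity of `Γ`) combined with Bernoulli's
inequality gives `Γ(l + γ) / l! > l ^ (γ - 1) - (1 - γ) l ^ (γ - 2)` for `l ≥ 1`.
-/

open Finset Polynomial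
open scoped Nat

theorem poch_eq_ascPochhammer_eval (c : ℝ) (m : ℕ) :
    poch c m = (ascPochhammer ℝ m).eval c := by
  induction m with
  | zero => simp [poch]
  | succ m ih => simp [poch, prod_range_succ, ascPochhammer_succ_right, ← ih]

theorem poch_eq_factorial_mul_choose (c : ℝ) (m : ℕ) :
    poch c m = m ! * Ring.choose (c + m - 1) m := by
  rw [← Ring.multichoose_eq, ← nsmul_eq_mul, Ring.factorial_nsmul_multichoose_eq_ascPochhammer,
    ascPochhammer_smeval_eq_eval, poch_eq_ascPochhammer_eval]

theorem poch_add (c : ℝ) (i m : ℕ) : poch c (i + m) = poch c i * poch (c + i) m := by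
  simp only [poch, prod_range_add, Nat.cast_add, add_assoc]

theorem poch_nonneg {c : ℝ} (hc : 0 ≤ c) (m : ℕ) : 0 ≤ poch c m :=
  prod_nonneg fun _ _ ↦ by positivity

theorem Gamma_mul_poch {c : ℝ} (hc : 0 < c) (l : ℕ) :
    Real.Gamma c * poch c l = Real.Gamma (c + l) := by
  induction l with
  | zero => simp [poch]
  | succ l ih =>
    rw [poch, prod_range_succ, ← poch, ← mul_assoc, ih, Nat.cast_succ, ← add_assoc,
      Real.Gamma_add_one (by positivity), mul_comm]

theorem stirling2_eq_stirlingSecond : ∀ n k, stirling2 n k = Nat.stirlingSecond n k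
  | 0, 0 | 0, _ + 1 | _ + 1, 0 => rfl
  | n + 1, k + 1 => by
    rw [stirling2, Nat.stirlingSecond_succ_succ, stirling2_eq_stirlingSecond n (k + 1),
      stirling2_eq_stirlingSecond n k]

theorem sum_stirlingSecond_mul_descPochhammer (R : Type*) [CommRing R] (n : ℕ) :
    ∑ i ∈ range (n + 1), (Nat.stirlingSecond n i : R[X]) * descPochhammer R i = X ^ n := by
  induction n with
  | zero => simp
  | succ n ih =>
    set S := Nat.stirlingSecond n
    set P := descPochhammer R
    have hXP (i : ℕ) : X * P i = P (i + 1) + (i : R[X]) * P i := by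
      simp only [P, descPochhammer_succ_right]; ring
    have hshift : ∑ k ∈ range (n + 1), ((k + 1 : ℕ) * S (k + 1) : R[X]) * P (k + 1)
        = ∑ i ∈ range (n + 1), (S i : R[X]) * ((i : R[X]) * P i) := by
      rw [sum_range_succ, show S (n + 1) = 0 from Nat.stirlingSecond_eq_zero_of_lt n.lt_succ_self,
        sum_range_succ' _ n]
      simp only [Nat.cast_zero, zero_mul, mul_zero, add_zero]
      exact sum_congr rfl fun k _ ↦ by ring
    calc ∑ i ∈ range (n + 1 + 1), (Nat.stirlingSecond (n + 1) i : R[X]) * P i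
        = ∑ k ∈ range (n + 1), ((k + 1 : ℕ) * S (k + 1) : R[X]) * P (k + 1)
          + ∑ k ∈ range (n + 1), (S k : R[X]) * P (k + 1) := by
          simp [S, sum_range_succ' _ (n + 1), Nat.stirlingSecond_succ_succ, add_mul,
            sum_add_distrib]
      _ = X * ∑ i ∈ range (n + 1), (S i : R[X]) * P i := by
          rw [hshift, mul_sum, ← sum_add_distrib]
          exact sum_congr rfl fun i _ ↦ by linear_combination -(S i : R[X]) * hXP i
      _ = X ^ (n + 1) := by rw [ih, pow_succ']

theorem sum_stirling2_mul_descFactorial (n l : ℕ) :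
    ∑ i ∈ range (n + 1), stirling2 n i * l.descFactorial i = l ^ n := by
  have h := congrArg (eval (l : ℤ)) (sum_stirlingSecond_mul_descPochhammer ℤ n)
  simp only [eval_finsetSum, eval_mul, eval_natCast, descPochhammer_eval_eq_descFactorial,
    eval_pow, eval_X] at h
  simp only [stirling2_eq_stirlingSecond]
  exact_mod_cast h

theorem hasSum_poch_div_factorial_mul_pow (c : ℝ) {x : ℝ} (hx : |x| < 1) :
    HasSum (fun m ↦ poch c m / m ! * x ^ m) ((1 - x) ^ (-c)) := by
  have h := (Real.one_div_one_sub_rpow_hasFPowerSeriesOnBall_zero c).hasSum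
    (y := x) (by simpa [edist_dist, Real.dist_eq] using hx)
  rw [FormalMultilinearSeries.ofScalars_apply_eq', zero_add, one_div,
    ← Real.rpow_neg (by linarith [le_abs_self x])] at h
  have hterm : (fun m : ℕ ↦ poch c m / m ! * x ^ m) =
      fun m : ℕ ↦ Ring.choose (c + m - 1) m • x ^ m :=
    funext fun m ↦ by rw [poch_eq_factorial_mul_choose, smul_eq_mul]; field_simp
  rw [hterm]
  exact h

theorem hasSum_poch_div_factorial_mul_descFactorial_mul_pow (c : ℝ) (i : ℕ) {x : ℝ}
    (hx : |x| < 1) :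
    HasSum (fun l : ℕ ↦ poch c l / l ! * l.descFactorial i * x ^ l)
      (poch c i * x ^ i * (1 - x) ^ (-(c + i))) := by
  have hhead : ∑ l ∈ range i, poch c l / l ! * l.descFactorial i * x ^ l = 0 :=
    sum_eq_zero fun l hl ↦ by
      simp [Nat.descFactorial_eq_zero_iff_lt.mpr (mem_range.mp hl)]
  rw [← add_zero (_ * _), ← hhead, ← hasSum_nat_add_iff]
  refine ((hasSum_poch_div_factorial_mul_pow (c + i) hx).mul_left (poch c i * x ^ i)).congr_fun
    fun m ↦ ?_
  have hfact : ((m + i)! : ℝ) = m ! * (m + i).descFactorial i := by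
    have h := Nat.factorial_mul_descFactorial (Nat.le_add_left i m)
    rw [Nat.add_sub_cancel] at h
    exact_mod_cast h.symm
  have hdesc : ((m + i).descFactorial i : ℝ) ≠ 0 := by
    exact_mod_cast (Nat.descFactorial_eq_zero_iff_lt.not.mpr (by omega))
  rw [hfact, add_comm m i, poch_add, pow_add]
  field_simp

theorem hasSum_poch_div_factorial_mul_natCast_pow_mul_pow (c : ℝ) (n : ℕ) {x : ℝ}
    (hx : |x| < 1) :
    HasSum (fun l : ℕ ↦ poch c l / l ! * (l : ℝ) ^ n * x ^ l)
      ((1 - x) ^ (-c) * ∑ i ∈ range (n + 1), stirling2 n i * poch c i * (x / (1 - x)) ^ i) := by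
  have h1x : 0 < 1 - x := by linarith [le_abs_self x]
  have h := hasSum_sum fun i (_ : i ∈ range (n + 1)) ↦
    (hasSum_poch_div_factorial_mul_descFactorial_mul_pow c i hx).mul_left (stirling2 n i : ℝ)
  have hval :
      (1 - x) ^ (-c) * ∑ i ∈ range (n + 1), stirling2 n i * poch c i * (x / (1 - x)) ^ i
        = ∑ i ∈ range (n + 1), stirling2 n i * (poch c i * x ^ i * (1 - x) ^ (-(c + i))) := by
    rw [mul_sum]
    refine sum_congr rfl fun i _ ↦ ?_
    rw [neg_add, Real.rpow_add h1x, Real.rpow_neg h1x.le (i : ℝ), Real.rpow_natCast, div_pow]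
    ring
  rw [hval]
  refine h.congr_fun fun l ↦ ?_
  rw [← Nat.cast_pow, ← sum_stirling2_mul_descFactorial, Nat.cast_sum, mul_sum, sum_mul]
  exact sum_congr rfl fun i _ ↦ by push_cast; ring

theorem abs_tcoef {α γ : ℝ} (hγ : 0 < γ) (hα0 : 0 ≤ α) (hα1 : α < 1) (n : ℕ) :
    |tcoef α γ n| =
      (1 - α) ^ γ * (γ ^ n)⁻¹ * ∑' l : ℕ, poch γ l / l ! * (l : ℝ) ^ n * α ^ l := by
  have h1α : 0 < 1 - α := by linarith
  rw [(hasSum_poch_div_factorial_mul_natCast_pow_mul_pow γ n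
    (abs_lt.mpr ⟨by linarith, hα1⟩)).tsum_eq, tcoef, abs_mul, abs_mul, abs_neg_one_pow, one_mul,
    abs_of_pos (by positivity),
    abs_of_nonneg (sum_nonneg fun i _ ↦ by have := poch_nonneg hγ.le i; positivity),
    Real.rpow_neg h1α.le]
  field_simp

-- Wendel's inequality: log-convexity of `Γ` on the segment `[x + s, x + s + 1]`.
theorem Gamma_add_one_le_Gamma_mul_rpow {x s : ℝ} (hs0 : 0 < s) (hs1 : s < 1)
    (hx : 0 < x + s) :
    Real.Gamma (x + 1) ≤ Real.Gamma (x + s) * (x + s) ^ (1 - s) := by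
  have hΓ : 0 < Real.Gamma (x + s) := Real.Gamma_pos_of_pos hx
  have h := Real.Gamma_mul_add_mul_le_rpow_Gamma_mul_rpow_Gamma (t := x + s + 1) hx
    (by positivity) hs0 (sub_pos.mpr hs1) (add_sub_cancel s 1)
  rwa [show s * (x + s) + (1 - s) * (x + s + 1) = x + 1 by ring, Real.Gamma_add_one hx.ne',
    Real.mul_rpow hx.le hΓ.le, mul_left_comm, ← Real.rpow_add hΓ, add_sub_cancel,
    Real.rpow_one, mul_comm] at h

theorem one_sub_mul_le_one_add_rpow_neg {p s : ℝ} (hp0 : 0 ≤ p) (hp1 : p ≤ 1) (hs : 0 ≤ s) :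
    1 - p * s ≤ (1 + s) ^ (-p) := by
  have hps : 0 < 1 + p * s := by positivity
  calc 1 - p * s ≤ (1 + p * s)⁻¹ := by
        rw [← one_div, le_div_iff₀ hps]; nlinarith [sq_nonneg (p * s)]
    _ ≤ ((1 + s) ^ p)⁻¹ :=
        inv_anti₀ (by positivity) (rpow_one_add_le_one_add_mul_self (by linarith) hp0 hp1)
    _ = (1 + s) ^ (-p) := (Real.rpow_neg (by positivity) p).symm

theorem rpow_sub_mul_rpow_lt_Gamma_div_Gamma {s x : ℝ} (hs0 : 0 < s) (hs1 : s < 1)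
    (hx : 0 < x) :
    x ^ (s - 1) - (1 - s) * x ^ (s - 2) < Real.Gamma (x + s) / Real.Gamma (x + 1) := by
  have hxs : 0 < x + s := by positivity
  have hbernoulli : x ^ (s - 1) - (1 - s) * x ^ (s - 2) ≤ (x + 1) ^ (s - 1) := by
    have h := one_sub_mul_le_one_add_rpow_neg (sub_nonneg.mpr hs1.le) (sub_le_self 1 hs0.le)
      (inv_pos.mpr hx).le
    rw [neg_sub] at h
    calc x ^ (s - 1) - (1 - s) * x ^ (s - 2) = x ^ (s - 1) * (1 - (1 - s) * x⁻¹) := by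
          rw [show s - 2 = (s - 1) - 1 by ring, Real.rpow_sub_one hx.ne' (s - 1)]; ring
      _ ≤ x ^ (s - 1) * (1 + x⁻¹) ^ (s - 1) := by gcongr
      _ = (x + 1) ^ (s - 1) := by
          rw [← Real.mul_rpow hx.le (by positivity), mul_add, mul_inv_cancel₀ hx.ne', mul_one]
  have hwendel : (x + s) ^ (s - 1) ≤ Real.Gamma (x + s) / Real.Gamma (x + 1) := by
    rw [le_div_iff₀ (Real.Gamma_pos_of_pos (by positivity)), show s - 1 = -(1 - s) by ring,
      Real.rpow_neg hxs.le, inv_mul_le_iff₀ (by positivity), mul_comm]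
    exact Gamma_add_one_le_Gamma_mul_rpow hs0 hs1 hxs
  calc x ^ (s - 1) - (1 - s) * x ^ (s - 2) ≤ (x + 1) ^ (s - 1) := hbernoulli
    _ < (x + s) ^ (s - 1) := Real.rpow_lt_rpow_of_neg hxs (by linarith) (by linarith)
    _ ≤ Real.Gamma (x + s) / Real.Gamma (x + 1) := hwendel

noncomputable def polylogCoeff (γ : ℝ) (n l : ℕ) : ℝ :=
  (l : ℝ) ^ ((n : ℝ) + γ - 1) - (1 - γ) * (l : ℝ) ^ ((n : ℝ) + γ - 2)

theorem intCast_add_ne_zero {γ : ℝ} (hγ0 : 0 < γ) (hγ1 : γ < 1) (m : ℤ) : (m : ℝ) + γ ≠ 0 := by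
  rcases le_or_gt 0 m with hm | hm
  · have : (0 : ℝ) ≤ m := by exact_mod_cast hm
    linarith
  · have : (m : ℝ) ≤ -1 := by exact_mod_cast (by omega : m ≤ -1)
    linarith

-- `0 ^ 0 = 1` for `Real.rpow`: both exponents must be shown nonzero, which is where `γ ∉ ℤ` enters.
theorem polylogCoeff_zero {γ : ℝ} (hγ0 : 0 < γ) (hγ1 : γ < 1) (n : ℕ) :
    polylogCoeff γ n 0 = 0 := by
  have h1 := intCast_add_ne_zero hγ0 hγ1 (n - 1)
  have h2 := intCast_add_ne_zero hγ0 hγ1 (n - 2)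
  push_cast at h1 h2
  rw [polylogCoeff, Nat.cast_zero, Real.zero_rpow (by convert h1 using 1; ring),
    Real.zero_rpow (by convert h2 using 1; ring), mul_zero, sub_zero]

theorem polylogCoeff_eq_pow_mul (γ : ℝ) (n : ℕ) {l : ℕ} (hl : 0 < l) :
    polylogCoeff γ n l = (l : ℝ) ^ n * ((l : ℝ) ^ (γ - 1) - (1 - γ) * (l : ℝ) ^ (γ - 2)) := by
  have hl' : (0 : ℝ) < l := by exact_mod_cast hl
  rw [polylogCoeff, add_sub_assoc, add_sub_assoc, Real.rpow_add hl', Real.rpow_add hl',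
    Real.rpow_natCast]
  ring

theorem polylogCoeff_nonneg {γ : ℝ} (hγ0 : 0 < γ) (hγ1 : γ < 1) (n l : ℕ) :
    0 ≤ polylogCoeff γ n l := by
  rcases Nat.eq_zero_or_pos l with rfl | hl
  · rw [polylogCoeff_zero hγ0 hγ1]
  have hl' : (1 : ℝ) ≤ l := by exact_mod_cast hl
  have hfactor : (l : ℝ) ^ (γ - 1) - (1 - γ) * (l : ℝ) ^ (γ - 2) =
      (l : ℝ) ^ (γ - 2) * (l - (1 - γ)) := by
    rw [show γ - 1 = (γ - 2) + 1 by ring, Real.rpow_add_one (by positivity)]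
    ring
  rw [polylogCoeff_eq_pow_mul γ n hl, hfactor]
  exact mul_nonneg (by positivity) (mul_nonneg (by positivity) (by linarith))

theorem inv_Gamma_mul_polylogCoeff_lt {γ : ℝ} (hγ0 : 0 < γ) (hγ1 : γ < 1) (n : ℕ) {l : ℕ}
    (hl : 0 < l) :
    (Real.Gamma γ)⁻¹ * polylogCoeff γ n l < poch γ l / l ! * (l : ℝ) ^ n := by
  have hl' : (0 : ℝ) < l := by exact_mod_cast hl
  have h := rpow_sub_mul_rpow_lt_Gamma_div_Gamma hγ0 hγ1 hl'
  rw [add_comm, ← Gamma_mul_poch hγ0, Real.Gamma_nat_eq_factorial,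
    mul_div_assoc, ← inv_mul_lt_iff₀ (Real.Gamma_pos_of_pos hγ0)] at h
  rw [polylogCoeff_eq_pow_mul γ n hl, mul_left_comm, mul_comm _ ((l : ℝ) ^ n)]
  exact mul_lt_mul_of_pos_left h (by positivity)

theorem inv_Gamma_mul_polylogCoeff_le {γ : ℝ} (hγ0 : 0 < γ) (hγ1 : γ < 1) (n l : ℕ) :
    (Real.Gamma γ)⁻¹ * polylogCoeff γ n l ≤ poch γ l / l ! * (l : ℝ) ^ n := by
  rcases Nat.eq_zero_or_pos l with rfl | hl
  · rw [polylogCoeff_zero hγ0 hγ1, mul_zero]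
    have := poch_nonneg hγ0.le 0
    positivity
  exact (inv_Gamma_mul_polylogCoeff_lt hγ0 hγ1 n hl).le

theorem tcoef_lower_bound_general (α γ : ℝ) (hγ0 : 0 < γ) (hγ1 : γ < 1)
    (hα0 : 0 < α) (hα1 : α < 1) (n : ℕ) :
    Summable (fun l : ℕ =>
      ((l : ℝ) ^ ((n : ℝ) + γ - 1) - (1 - γ) * (l : ℝ) ^ ((n : ℝ) + γ - 2)) * α^l) ∧
    |tcoef α γ n| > (1 - α) ^ γ * (γ^n)⁻¹ * (Real.Gamma γ)⁻¹ *
      ∑' l : ℕ, ((l : ℝ) ^ ((n : ℝ) + γ - 1) - (1 - γ) * (l : ℝ) ^ ((n : ℝ) + γ - 2)) * α^l := by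
  have hΓ : 0 < Real.Gamma γ := Real.Gamma_pos_of_pos hγ0
  have hmoment := hasSum_poch_div_factorial_mul_natCast_pow_mul_pow γ n
    (abs_lt.mpr ⟨by linarith, hα1⟩)
  have hle (l : ℕ) : (Real.Gamma γ)⁻¹ * (polylogCoeff γ n l * α ^ l) ≤
      poch γ l / l ! * (l : ℝ) ^ n * α ^ l := by
    rw [← mul_assoc]
    exact mul_le_mul_of_nonneg_right (inv_Gamma_mul_polylogCoeff_le hγ0 hγ1 n l) (by positivity)
  have hlt {l : ℕ} (hl : 0 < l) : (Real.Gamma γ)⁻¹ * (polylogCoeff γ n l * α ^ l) <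
      poch γ l / l ! * (l : ℝ) ^ n * α ^ l := by
    rw [← mul_assoc]
    exact mul_lt_mul_of_pos_right (inv_Gamma_mul_polylogCoeff_lt hγ0 hγ1 n hl) (by positivity)
  have hsummable : Summable fun l : ℕ ↦ (Real.Gamma γ)⁻¹ * (polylogCoeff γ n l * α ^ l) :=
    .of_nonneg_of_le (fun l ↦ by have := polylogCoeff_nonneg hγ0 hγ1 n l; positivity) hle
      hmoment.summable
  refine ⟨(summable_mul_left_iff (inv_ne_zero hΓ.ne')).mp hsummable, ?_⟩
  rw [abs_tcoef hγ0 hα0.le hα1, mul_assoc _ (Real.Gamma γ)⁻¹,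
    ← tsum_mul_left (a := (Real.Gamma γ)⁻¹)]
  exact mul_lt_mul_of_pos_left (hsummable.tsum_lt_tsum hle (hlt one_pos) hmoment.summable)
    (by positivity)

/-- For `0 < γ < 1`, `0 < α < 1`, `n ≥ 1`:
`|t_n| > (1−α)^γ γ^{−n} Γ(γ)^{−1} ∑_{l≥1} (l^{n+γ−1} − (1−γ) l^{n+γ−2}) α^l`, the series
(which equals `Li_{−n−γ+1}(α) − (1−γ) Li_{−n−γ+2}(α)`) being convergent. -/
theorem tcoef_lower_bound (α γ : ℝ) (hγ0 : 0 < γ) (hγ1 : γ < 1)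
    (hα0 : 0 < α) (hα1 : α < 1) (n : ℕ) (hn : 1 ≤ n) :
    Summable (fun l : ℕ =>
      ((l : ℝ) ^ ((n : ℝ) + γ - 1) - (1 - γ) * (l : ℝ) ^ ((n : ℝ) + γ - 2)) * α^l) ∧
    |tcoef α γ n| > (1 - α) ^ γ * (γ^n)⁻¹ * (Real.Gamma γ)⁻¹ *
      ∑' l : ℕ, ((l : ℝ) ^ ((n : ℝ) + γ - 1) - (1 - γ) * (l : ℝ) ^ ((n : ℝ) + γ - 2)) * α^l :=
  tcoef_lower_bound_general α γ hγ0 hγ1 hα0 hα1 n
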